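/- arXiv:2605.26247 — 4 statements merged into one kernel-verified Lean document; each statement's English description precedes it below -/
import Mathlib

section
/- Let n₁ and n₂ be finite index types and let A : ℝ → M_{n₁⊕n₂}(ℝ) be a continuous matrix-valued function that is block upper triangular, i.e. A(t)(inr i, inl j) = 0 for all t ∈ ℝ, i ∈ n₂, j ∈ n₁. Let Φ : ℝ → M_{n₁⊕n₂}(ℝ) be differentiable with Φ'(t) = A(t)·Φ(t) for all t and Φ(0) = I. Then Φ is block upper triangular with the same block structure, i.e. Φ(t)(inr i, inl j) = 0 for all t, i, j; moreover the diagonal blocks Φ₁₁(t) := (Φ(t)(inl i, inl j))_{i,j} and Φ₂₂(t) := (Φ(t)(inr i, inr j))_{i,j} satisfy Φ₁₁'(t) = A₁₁(t)·Φ₁₁(t) with Φ₁₁(0) = I and Φ₂₂'(t) = A₂₂(t)·Φ₂₂(t) with Φ₂₂(0) = I, where A₁₁(t) and A₂₂(t) are the corresponding diagonal blocks of A(t). -/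
open Matrix Set
open scoped NNReal

theorem lip_aux {n₂ n₁ : Type*} [Fintype n₂] [Fintype n₁] (a : Matrix n₂ n₂ ℝ) (C : ℝ≥0)
    (h : ∀ i k, |a i k| ≤ C) :
    LipschitzWith (Fintype.card n₂ * C)
      (fun x : n₂ → n₁ → ℝ => fun i j => ∑ k, a i k * x k j) := by
  apply LipschitzWith.of_dist_le_mul
  intro x y
  rw [dist_pi_le_iff (by positivity)]
  intro i
  rw [dist_pi_le_iff (by positivity)]
  intro j
  rw [Real.dist_eq]
  have : (∑ k, a i k * x k j) - (∑ k, a i k * y k j) = ∑ k, a i k * (x k j - y k j) := by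
    rw [← Finset.sum_sub_distrib]; congr 1; funext k; ring
  rw [this]
  calc |∑ k, a i k * (x k j - y k j)| ≤ ∑ k, |a i k * (x k j - y k j)| := Finset.abs_sum_le_sum_abs _ _
    _ ≤ ∑ _k : n₂, (C : ℝ) * dist x y := by
        apply Finset.sum_le_sum
        intro k _
        rw [abs_mul]
        apply mul_le_mul (h i k) ?_ (abs_nonneg _) C.coe_nonneg
        calc |x k j - y k j| = dist (x k j) (y k j) := (Real.dist_eq _ _).symm
          _ ≤ dist (x k) (y k) := dist_le_pi_dist _ _ _
          _ ≤ dist x y := dist_le_pi_dist _ _ _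
    _ = (Fintype.card n₂ * C : ℝ≥0) * dist x y := by
        simp [Finset.sum_const, Finset.card_univ]; ring

/-- A block upper triangular fundamental matrix: if `A(t)` is block upper
triangular, then so is `Φ(t)`, and its diagonal blocks are fundamental matrices
of the diagonal blocks of `A(t)`. -/
theorem stmt_0 {n₁ n₂ : Type*} [Fintype n₁] [Fintype n₂] [DecidableEq n₁] [DecidableEq n₂]
    (A Φ : ℝ → Matrix (n₁ ⊕ n₂) (n₁ ⊕ n₂) ℝ)
    (hAcont : ∀ i j, Continuous fun t => A t i j)
    (hAblock : ∀ (t : ℝ) (i : n₂) (j : n₁), A t (Sum.inr i) (Sum.inl j) = 0)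
    (hΦderiv : ∀ (t : ℝ) i j, HasDerivAt (fun s => Φ s i j) ((A t * Φ t) i j) t)
    (hΦ0 : Φ 0 = 1) :
    (∀ (t : ℝ) (i : n₂) (j : n₁), Φ t (Sum.inr i) (Sum.inl j) = 0) ∧
    (∀ (t : ℝ) (i j : n₁),
      HasDerivAt (fun s => Φ s (Sum.inl i) (Sum.inl j))
        ((Matrix.of (fun a b : n₁ => A t (Sum.inl a) (Sum.inl b)) *
          Matrix.of (fun a b : n₁ => Φ t (Sum.inl a) (Sum.inl b))) i j) t) ∧
    (Matrix.of (fun a b : n₁ => Φ 0 (Sum.inl a) (Sum.inl b)) = 1) ∧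
    (∀ (t : ℝ) (i j : n₂),
      HasDerivAt (fun s => Φ s (Sum.inr i) (Sum.inr j))
        ((Matrix.of (fun a b : n₂ => A t (Sum.inr a) (Sum.inr b)) *
          Matrix.of (fun a b : n₂ => Φ t (Sum.inr a) (Sum.inr b))) i j) t) ∧
    (Matrix.of (fun a b : n₂ => Φ 0 (Sum.inr a) (Sum.inr b)) = 1) := by
  have key : ∀ (t : ℝ) (i : n₂) (j : n₁), Φ t (Sum.inr i) (Sum.inl j) = 0 := by
    intro T i₀ j₀
    set b : ℝ := |T| + 1 with hb
    have hb0 : 0 < b := by positivity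
    have hnbb : -b < b := by linarith [abs_nonneg T]
    -- bound the entries of A₂₂ on [-b, b]
    have hAc : Continuous (fun t => (fun i k => A t (Sum.inr i) (Sum.inr k) : n₂ → n₂ → ℝ)) :=
      continuous_pi fun i => continuous_pi fun k => hAcont _ _
    obtain ⟨C, hC⟩ := (isCompact_Icc (a := -b) (b := b)).exists_bound_of_continuousOn
      hAc.continuousOn
    set C' : ℝ≥0 := Real.toNNReal C with hC'
    -- clamp
    set cl : ℝ → ℝ := fun t => max (-b) (min b t) with hcl
    have hclmem : ∀ t, cl t ∈ Icc (-b) b := by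
      intro t
      constructor
      · exact le_max_left _ _
      · exact max_le hnbb.le (min_le_left _ _)
    have hcleq : ∀ t ∈ Icc (-b) b, cl t = t := by
      intro t ht
      simp only [hcl]
      rw [min_eq_right ht.2, max_eq_right ht.1]
    set v : ℝ → (n₂ → n₁ → ℝ) → (n₂ → n₁ → ℝ) :=
      fun t x => fun i j => ∑ k, A (cl t) (Sum.inr i) (Sum.inr k) * x k j with hv_def
    have hv : ∀ t, LipschitzOnWith (Fintype.card n₂ * C') (v t) univ := by
      intro t
      apply LipschitzWith.lipschitzOnWith
      apply lip_aux
      intro i k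
      calc |A (cl t) (Sum.inr i) (Sum.inr k)|
          ≤ ‖(fun k => A (cl t) (Sum.inr i) (Sum.inr k) : n₂ → ℝ)‖ := by
            have := norm_le_pi_norm (fun k => A (cl t) (Sum.inr i) (Sum.inr k) : n₂ → ℝ) k
            simpa using this
        _ ≤ ‖(fun i k => A (cl t) (Sum.inr i) (Sum.inr k) : n₂ → n₂ → ℝ)‖ :=
            norm_le_pi_norm (fun i k => A (cl t) (Sum.inr i) (Sum.inr k) : n₂ → n₂ → ℝ) i
        _ ≤ C := hC _ (hclmem t)
        _ ≤ C' := Real.le_coe_toNNReal C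
    set f : ℝ → (n₂ → n₁ → ℝ) := fun t => fun i j => Φ t (Sum.inr i) (Sum.inl j) with hf_def
    have hfd : ∀ t ∈ Ioo (-b) b, HasDerivAt f (v t (f t)) t := by
      intro t ht
      have : v t (f t) = fun i j => (A t * Φ t) (Sum.inr i) (Sum.inl j) := by
        funext i j
        rw [hv_def]
        simp only [hcleq t (Ioo_subset_Icc_self ht)]
        rw [Matrix.mul_apply, Fintype.sum_sum_type]
        simp [hAblock, hf_def]
      rw [this]
      exact hasDerivAt_pi.mpr fun i => hasDerivAt_pi.mpr fun j => hΦderiv t _ _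
    have hfc : Continuous f :=
      continuous_pi fun i => continuous_pi fun j =>
        continuous_iff_continuousAt.mpr fun t => (hΦderiv t (Sum.inr i) (Sum.inl j)).continuousAt
    have hgd : ∀ t ∈ Ioo (-b) b, HasDerivAt (fun _ : ℝ => (0 : n₂ → n₁ → ℝ)) (v t 0) t := by
      intro t ht
      have : v t 0 = 0 := by funext i j; simp [hv_def]
      rw [this]
      exact hasDerivAt_const _ _
    have heq0 : f 0 = 0 := by
      funext i j
      simp only [hf_def, hΦ0]
      exact Matrix.one_apply_ne (by simp)
    have := ODE_solution_unique_of_mem_Icc (v := v) (s := fun _ => univ) (fun t _ => hv t)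
      (t₀ := (0 : ℝ)) (a := -b) (b := b) ⟨neg_neg_iff_pos.mpr hb0, hb0⟩
      hfc.continuousOn hfd (fun _ _ => trivial)
      continuous_const.continuousOn hgd (fun _ _ => trivial) heq0
    have hT : T ∈ Icc (-b) b := by
      constructor <;> [linarith [neg_abs_le T]; linarith [le_abs_self T]]
    have := this hT
    exact congrFun (congrFun this i₀) j₀
  refine ⟨key, ?_, ?_, ?_, ?_⟩
  · intro t i j
    have h := hΦderiv t (Sum.inl i) (Sum.inl j)
    convert h using 1
    rw [Matrix.mul_apply, Matrix.mul_apply, Fintype.sum_sum_type]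
    simp [key]
  · funext i j
    simp only [Matrix.of_apply, hΦ0]
    rw [Matrix.one_apply, Matrix.one_apply]
    simp [Sum.inl.injEq]
  · intro t i j
    have h := hΦderiv t (Sum.inr i) (Sum.inr j)
    convert h using 1
    rw [Matrix.mul_apply, Matrix.mul_apply, Fintype.sum_sum_type]
    simp [hAblock]
  · funext i j
    simp only [Matrix.of_apply, hΦ0]
    rw [Matrix.one_apply, Matrix.one_apply]
    simp [Sum.inr.injEq]
end

section
/- Let n be a finite type and let A : ℝ → M_n(ℝ) be continuous with nonnegative off-diagonal entries for every time: A(t) i j ≥ 0 for all t ∈ ℝ and all i ≠ j. Let Φ : ℝ → M_n(ℝ) be differentiable with Φ'(t) = Φ(t)·A(t) for all t and Φ(0) = I. Then every entry of Φ(t) is nonnegative for all t ≥ 0: Φ(t) i j ≥ 0 for all i, j and all t ≥ 0. -/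
open Matrix Filter


lemma hasDerivAt_min_zero_sq (x : ℝ) :
    HasDerivAt (fun y : ℝ => min y 0 ^ 2) (2 * min x 0) x := by
  rcases lt_trichotomy x 0 with hx | hx | hx
  · have h : (fun y : ℝ => y ^ 2) =ᶠ[nhds x] fun y => min y 0 ^ 2 := by
      filter_upwards [eventually_lt_nhds hx] with y hy
      rw [min_eq_left hy.le]
    have h2 := hasDerivAt_pow 2 x
    have h3 := h2.congr_of_eventuallyEq h.symm
    simpa [min_eq_left hx.le, mul_comm] using h3
  · subst hx
    rw [hasDerivAt_iff_tendsto_slope]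
    simp only [min_self, ne_eq, zero_pow, mul_zero]
    apply squeeze_zero_norm' (a := fun y : ℝ => |y|)
    · filter_upwards [self_mem_nhdsWithin] with y (hy : y ≠ 0)
      have h1 : |min y 0| ≤ |y| := by
        rcases le_or_gt y 0 with h | h
        · rw [min_eq_left h]
        · simp [min_eq_right h.le]
      have h2 : min y 0 ^ 2 ≤ y ^ 2 := by
        rw [← sq_abs, ← sq_abs y]; exact pow_le_pow_left₀ (abs_nonneg _) h1 2
      rw [slope_def_field]
      simp only [sub_zero, div_eq_mul_inv]
      rw [norm_mul, norm_inv, Real.norm_eq_abs, Real.norm_eq_abs]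
      rw [show (min 0 0 : ℝ) ^ 2 = 0 by simp]
      have hy' : (0:ℝ) < |y| := abs_pos.2 hy
      rw [sub_zero]
      calc |min y 0 ^ 2| * |y|⁻¹ ≤ y ^ 2 * |y|⁻¹ := by
            apply mul_le_mul_of_nonneg_right _ (by positivity)
            rw [abs_of_nonneg (sq_nonneg _)]; exact h2
        _ = |y| := by rw [← sq_abs y]; field_simp
    · exact (continuous_abs.tendsto' 0 0 (by simp)).mono_left nhdsWithin_le_nhds
  · have h : (fun _ : ℝ => (0:ℝ)) =ᶠ[nhds x] fun y => min y 0 ^ 2 := by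
      filter_upwards [eventually_gt_nhds hx] with y hy
      rw [min_eq_right hy.le]; simp
    have h3 := (hasDerivAt_const x (0:ℝ)).congr_of_eventuallyEq h.symm
    simpa [min_eq_right hx.le] using h3

/-- The fundamental matrix of `ẋ = x·A(t)` with Metzler `A(t)`
(nonnegative off-diagonal entries) is entrywise nonnegative for `t ≥ 0`. -/
theorem stmt_3 {n : Type*} [Fintype n] [DecidableEq n]
    (A Φ : ℝ → Matrix n n ℝ)
    (hAcont : ∀ i j, Continuous fun t => A t i j)
    (hMetzler : ∀ (t : ℝ) i j, i ≠ j → 0 ≤ A t i j)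
    (hΦderiv : ∀ (t : ℝ) i j, HasDerivAt (fun s => Φ s i j) ((Φ t * A t) i j) t)
    (hΦ0 : Φ 0 = 1) :
    ∀ t : ℝ, 0 ≤ t → ∀ i j, 0 ≤ Φ t i j := by
  intro t₀ ht₀ i₀ j₀
  -- bound A on [0,t₀]
  obtain ⟨C₀, hC₀⟩ : ∃ C, ∀ s ∈ Set.Icc (0:ℝ) t₀, ∀ k j, |A s k j| ≤ C := by
    have hcont : Continuous (fun s => fun p : n × n => A s p.1 p.2) :=
      continuous_pi fun p => hAcont p.1 p.2
    obtain ⟨C, hC⟩ := (isCompact_Icc (a := (0:ℝ)) (b := t₀)).exists_bound_of_continuousOn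
      hcont.continuousOn
    refine ⟨C, fun s hs k j => ?_⟩
    have := (norm_le_pi_norm (fun p : n × n => A s p.1 p.2) (k, j)).trans (hC s hs)
    simpa [Real.norm_eq_abs] using this
  set C := max C₀ 0 with hCdef
  have hC : ∀ s ∈ Set.Icc (0:ℝ) t₀, ∀ k j, |A s k j| ≤ C :=
    fun s hs k j => (hC₀ s hs k j).trans (le_max_left _ _)
  have hC0 : (0:ℝ) ≤ C := le_max_right _ _
  set m : ℝ → n → n → ℝ := fun s i j => min (Φ s i j) 0 with hm
  set N : ℝ → ℝ := fun s => ∑ p : n × n, m s p.1 p.2 ^ 2 with hNdef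
  set N' : ℝ → ℝ := fun s => ∑ p : n × n, 2 * m s p.1 p.2 * ((Φ s * A s) p.1 p.2) with hN'def
  have hN : ∀ s, HasDerivAt N (N' s) s := by
    intro s
    apply HasDerivAt.fun_sum
    intro p _
    exact (hasDerivAt_min_zero_sq (Φ s p.1 p.2)).comp s (hΦderiv s p.1 p.2)
  set L : ℝ := 4 * C * (Fintype.card n) with hLdef
  have hNnonneg : ∀ s, 0 ≤ N s := fun s => Finset.sum_nonneg fun p _ => sq_nonneg _
  have key : ∀ s ∈ Set.Icc (0:ℝ) t₀, N' s ≤ L * N s := by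
    intro s hs
    have claim : ∀ i j k : n, 2 * m s i j * (Φ s i k * A s k j)
        ≤ 2 * C * (m s i j ^ 2 + m s i k ^ 2) := by
      intro i j k
      have hA := hC s hs k j
      have hA2 : A s k j ≤ C := (le_abs_self _).trans hA
      have hA3 : -C ≤ A s k j := neg_le_of_abs_le hA
      have hmle : m s i j ≤ 0 := min_le_right _ _
      by_cases hkj : k = j
      · subst hkj
        have hsplit : m s i k * Φ s i k = m s i k ^ 2 := by
          rcases le_or_gt (Φ s i k) 0 with h | h
          · simp [hm, min_eq_left h]; ring
          · simp [hm, min_eq_right h.le]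
        nlinarith [sq_nonneg (m s i k)]
      · have hA1 : 0 ≤ A s k j := hMetzler s k j hkj
        have hsplit : Φ s i k = m s i k + max (Φ s i k) 0 := by
          have h := min_add_max (Φ s i k) (0:ℝ)
          simp only [hm]; linarith
        have hp : 0 ≤ max (Φ s i k) 0 := le_max_right _ _
        rw [hsplit]
        nlinarith [mul_nonpos_of_nonpos_of_nonneg hmle (mul_nonneg hp hA1),
          mul_nonneg hA1 (sq_nonneg (m s i j - m s i k)),
          mul_nonneg (sub_nonneg.2 hA2) (add_nonneg (sq_nonneg (m s i j)) (sq_nonneg (m s i k))),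
          mul_nonneg hC0 (add_nonneg (sq_nonneg (m s i j)) (sq_nonneg (m s i k)))]
    calc N' s = ∑ p : n × n, ∑ k, 2 * m s p.1 p.2 * (Φ s p.1 k * A s k p.2) := by
          simp only [hN'def, Matrix.mul_apply, Finset.mul_sum]
      _ ≤ ∑ p : n × n, ∑ k, 2 * C * (m s p.1 p.2 ^ 2 + m s p.1 k ^ 2) := by
          apply Finset.sum_le_sum
          intro p _
          exact Finset.sum_le_sum fun k _ => claim p.1 p.2 k
      _ = L * N s := by
          simp only [Fintype.sum_prod_type, mul_add, Finset.sum_add_distrib,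
            Finset.sum_const, Finset.card_univ, nsmul_eq_mul, hNdef, hLdef, Finset.mul_sum]
          rw [← Finset.sum_add_distrib]
          refine Finset.sum_congr rfl fun x _ => ?_
          rw [← Finset.sum_add_distrib]
          refine Finset.sum_congr rfl fun y _ => ?_
          ring
  -- g = N * exp(-L s) is antitone on Icc
  set g : ℝ → ℝ := fun s => N s * Real.exp (-L * s) with hgdef
  have hg : ∀ s, HasDerivAt g ((N' s - L * N s) * Real.exp (-L * s)) s := by
    intro s
    have he : HasDerivAt (fun s : ℝ => Real.exp (-L * s)) (-L * Real.exp (-L * s)) s := by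
      have := ((hasDerivAt_id s).const_mul (-L)).exp
      simpa [mul_comm] using this
    have := (hN s).fun_mul he
    exact this.congr_deriv (by ring)
  have hanti : AntitoneOn g (Set.Icc 0 t₀) := by
    apply antitoneOn_of_deriv_nonpos (convex_Icc 0 t₀)
    · exact fun x _ => ((hg x).continuousAt).continuousWithinAt
    · exact fun x _ => (hg x).differentiableAt.differentiableWithinAt
    · intro x hx
      rw [interior_Icc] at hx
      rw [(hg x).deriv]
      apply mul_nonpos_of_nonpos_of_nonneg
      · have := key x ⟨hx.1.le, hx.2.le⟩
        linarith
      · positivity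
  have hg0 : g 0 = 0 := by
    have : N 0 = 0 := by
      apply Finset.sum_eq_zero
      intro p _
      simp only [hm, hΦ0, Matrix.one_apply]
      split_ifs <;> simp
    simp [hgdef, this]
  have hle : g t₀ ≤ g 0 := hanti ⟨le_refl 0, ht₀⟩ ⟨ht₀, le_refl t₀⟩ ht₀
  have hNt : N t₀ = 0 := by
    have h1 : N t₀ * Real.exp (-L * t₀) ≤ 0 := by rw [hg0] at hle; exact hle
    have h2 : 0 < Real.exp (-L * t₀) := Real.exp_pos _
    nlinarith [hNnonneg t₀]
  have : m t₀ i₀ j₀ ^ 2 = 0 := by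
    have := (Finset.sum_eq_zero_iff_of_nonneg (fun p _ => sq_nonneg (m t₀ p.1 p.2))).1 hNt
      (i₀, j₀) (Finset.mem_univ _)
    exact this
  have hmin : min (Φ t₀ i₀ j₀) 0 = 0 := by
    have := sq_eq_zero_iff.1 this
    exact this
  rw [min_eq_right_iff] at hmin
  exact hmin
end

section
/- Let n be a nonempty finite type and T > 0. Let A : ℝ → M_n(ℝ) and b : ℝ → (n → ℝ) be continuous and T-periodic, i.e. A(t+T) = A(t) and b(t+T) = b(t) for all t. Let Φ : ℝ → M_n(ℝ) be differentiable with Φ'(t) = A(t)·Φ(t) for all t and Φ(0) = I, and assume every complex eigenvalue λ of the monodromy matrix Φ(T) satisfies |λ| < 1. Then: (i) there exists a unique differentiable x⋆ : ℝ → (n → ℝ) satisfying (x⋆)'(t) = A(t)·x⋆(t) + b(t) for all t and x⋆(t+T) = x⋆(t) for all t ≥ 0; (ii) there exist constants γ > 0 and m ≥ 1 such that every differentiable solution x of x'(t) = A(t)·x(t) + b(t) satisfies ‖x(t) − x⋆(t)‖₂ ≤ m·e^{−γt}·‖x(0) − x⋆(0)‖₂ for all t ≥ 0, where ‖·‖₂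 is the Euclidean norm on n → ℝ. -/
set_option linter.unusedSectionVars false
set_option maxHeartbeats 1000000

open Matrix Set

attribute [local instance]
  Matrix.linftyOpNormedAddCommGroup Matrix.linftyOpNormedRing Matrix.linftyOpNormedAlgebra
  Matrix.linftyOpNormedSpace

namespace Floq

variable {n : Type*} [Fintype n] [DecidableEq n]

/-- linfty op norm is at most the sum of entry norms. -/
lemma norm_le_sum_entries (X : Matrix n n ℝ) : ‖X‖ ≤ ∑ i, ∑ j, ‖X i j‖ := by
  rw [Matrix.linfty_opNorm_def]
  have h : ((Finset.univ : Finset n).sup fun i => ∑ j, ‖X i j‖₊) ≤ ∑ i, ∑ j, ‖X i j‖₊ :=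
    Finset.sup_le fun i _ =>
      Finset.single_le_sum (f := fun i => ∑ j, ‖X i j‖₊) (fun _ _ => zero_le)
        (Finset.mem_univ i)
  calc ((Finset.univ.sup fun i : n => ∑ j, ‖X i j‖₊ : NNReal) : ℝ)
      ≤ ((∑ i, ∑ j, ‖X i j‖₊ : NNReal) : ℝ) := by exact_mod_cast h
    _ = ∑ i, ∑ j, ‖X i j‖ := by push_cast; rfl

/-- Entrywise-continuous matrix family is bounded in norm on a compact interval. -/
lemma bound_on_Icc (M : ℝ → Matrix n n ℝ) (h : ∀ i j, Continuous fun t => M t i j)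
    (a b : ℝ) : ∃ C : ℝ, 0 ≤ C ∧ ∀ t ∈ Icc a b, ‖M t‖ ≤ C := by
  have h' : ∀ i j : n, ∃ C : ℝ, ∀ t ∈ Icc a b, ‖M t i j‖ ≤ C := fun i j =>
    isCompact_Icc.exists_bound_of_continuousOn (h i j).continuousOn
  choose B hB using h'
  refine ⟨∑ i, ∑ j, max (B i j) 0, by positivity, fun t ht => ?_⟩
  refine (norm_le_sum_entries (M t)).trans ?_
  refine Finset.sum_le_sum fun i _ => Finset.sum_le_sum fun j _ => ?_
  exact (hB i j t ht).trans (le_max_left _ _)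

/-- derivative of `t ↦ (Φ t *ᵥ v) i`. -/
lemma hasDerivAt_mulVec {Φ : ℝ → Matrix n n ℝ} {Φ' : Matrix n n ℝ} {t : ℝ}
    (h : ∀ i j, HasDerivAt (fun s => Φ s i j) (Φ' i j) t) (v : n → ℝ) (i : n) :
    HasDerivAt (fun s => (Φ s *ᵥ v) i) ((Φ' *ᵥ v) i) t := by
  simp only [Matrix.mulVec, dotProduct]
  exact HasDerivAt.fun_sum fun j _ => (h i j).mul_const (v j)

/-- Uniqueness for linear ODEs with entrywise continuous coefficient matrix. -/
lemma lin_uniq (A : ℝ → Matrix n n ℝ) (hA : ∀ i j, Continuous fun t => A t i j)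
    (c : ℝ → n → ℝ) (f g : ℝ → n → ℝ)
    (hf : ∀ t, HasDerivAt f (A t *ᵥ f t + c t) t)
    (hg : ∀ t, HasDerivAt g (A t *ᵥ g t + c t) t)
    (t₀ : ℝ) (h₀ : f t₀ = g t₀) : f = g := by
  funext t₁
  set a : ℝ := min t₀ t₁ - 1 with ha
  set b' : ℝ := max t₀ t₁ + 1 with hb'
  have hab : a < b' := by
    have h1 : min t₀ t₁ ≤ max t₀ t₁ := (min_le_left _ _).trans (le_max_left _ _)
    linarith
  have ht₀ : t₀ ∈ Ioo a b' := by
    constructor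
    · have := min_le_left t₀ t₁; simp only [ha]; linarith
    · have := le_max_left t₀ t₁; simp only [hb']; linarith
  have ht₁ : t₁ ∈ Icc a b' := by
    constructor
    · have := min_le_right t₀ t₁; simp only [ha]; linarith
    · have := le_max_right t₀ t₁; simp only [hb']; linarith
  -- clamp function
  set u : ℝ → ℝ := fun t => max a (min b' t) with hu
  have hu_mem : ∀ t, u t ∈ Icc a b' := fun t =>
    ⟨le_max_left _ _, max_le hab.le (min_le_left _ _)⟩
  have hu_id : ∀ t ∈ Ioo a b', u t = t := by
    intro t ht
    simp only [hu]
    rw [min_eq_right ht.2.le, max_eq_right ht.1.le]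
  obtain ⟨C, hC0, hC⟩ := bound_on_Icc A hA a b'
  set K : NNReal := C.toNNReal with hK
  set v : ℝ → (n → ℝ) → (n → ℝ) := fun t y => A (u t) *ᵥ y + c (u t) with hv
  have hlip : ∀ t, LipschitzOnWith K (v t) (univ : Set (n → ℝ)) := by
    intro t
    rw [lipschitzOnWith_iff_dist_le_mul]
    intro y _ z _
    simp only [hv, dist_eq_norm, add_sub_add_right_eq_sub, ← Matrix.mulVec_sub]
    calc ‖A (u t) *ᵥ (y - z)‖ ≤ ‖A (u t)‖ * ‖y - z‖ := Matrix.linfty_opNorm_mulVec _ _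
      _ ≤ K * ‖y - z‖ := by
          refine mul_le_mul_of_nonneg_right ?_ (norm_nonneg _)
          exact (hC _ (hu_mem t)).trans (Real.coe_toNNReal C hC0).symm.le
      _ = (K : ℝ) * dist y z := by rw [dist_eq_norm]
  have key : EqOn f g (Icc a b') := by
    refine ODE_solution_unique_of_mem_Icc (fun t _ => hlip t) ht₀ ?_ ?_ (fun _ _ => mem_univ _) ?_ ?_
      (fun _ _ => mem_univ _) h₀
    · exact (Continuous.continuousOn (continuous_iff_continuousAt.2
        fun t => (hf t).continuousAt))
    · intro t ht
      have := hf t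
      simpa only [hv, hu_id t ht] using this
    · exact (Continuous.continuousOn (continuous_iff_continuousAt.2
        fun t => (hg t).continuousAt))
    · intro t ht
      have := hg t
      simpa only [hv, hu_id t ht] using this
  exact key ht₁


/-- Euclidean norm is at most `√card` times the sup norm. -/
lemma sqrt_sum_sq_le (u : n → ℝ) :
    Real.sqrt (∑ i, u i ^ 2) ≤ Real.sqrt (Fintype.card n) * ‖u‖ := by
  have h1 : ∑ i, u i ^ 2 ≤ (Fintype.card n : ℝ) * ‖u‖ ^ 2 := by
    calc ∑ i, u i ^ 2 ≤ ∑ _i : n, ‖u‖ ^ 2 := by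
          refine Finset.sum_le_sum fun i _ => ?_
          have := norm_le_pi_norm u i
          have h0 : (0:ℝ) ≤ |u i| := abs_nonneg _
          rw [Real.norm_eq_abs] at this
          calc u i ^ 2 = |u i| ^ 2 := (sq_abs _).symm
            _ ≤ ‖u‖ ^ 2 := by
                exact pow_le_pow_left₀ h0 this 2
      _ = (Fintype.card n : ℝ) * ‖u‖ ^ 2 := by
          rw [Finset.sum_const, Finset.card_univ, nsmul_eq_mul]
  calc Real.sqrt (∑ i, u i ^ 2) ≤ Real.sqrt ((Fintype.card n : ℝ) * ‖u‖ ^ 2) :=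
        Real.sqrt_le_sqrt h1
    _ = Real.sqrt (Fintype.card n) * ‖u‖ := by
        rw [Real.sqrt_mul (Nat.cast_nonneg _), Real.sqrt_sq (norm_nonneg _)]

/-- sup norm is at most the Euclidean norm. -/
lemma norm_le_sqrt_sum_sq (u : n → ℝ) : ‖u‖ ≤ Real.sqrt (∑ i, u i ^ 2) := by
  refine pi_norm_le_iff_of_nonneg (Real.sqrt_nonneg _) |>.2 fun i => ?_
  rw [Real.norm_eq_abs, ← Real.sqrt_sq_eq_abs]
  exact Real.sqrt_le_sqrt (Finset.single_le_sum (f := fun i => u i ^ 2)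
    (fun j _ => sq_nonneg _) (Finset.mem_univ i))

/-- complexification preserves the linfty operator nnnorm. -/
lemma nnnorm_map_ofReal (X : Matrix n n ℝ) :
    ‖X.map (Complex.ofReal : ℝ → ℂ)‖₊ = ‖X‖₊ := by
  simp only [Matrix.linfty_opNNNorm_def, Matrix.map_apply]
  congr 1
  funext i
  congr 1
  funext j
  apply NNReal.coe_injective
  simp [coe_nnnorm, Complex.norm_real, Real.norm_eq_abs]


lemma pow_bound [Nonempty n] (M : Matrix n n ℝ)
    (h : ∀ (lam : ℂ) (v : n → ℂ), v ≠ 0 →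
      (M.map (Complex.ofReal : ℝ → ℂ)) *ᵥ v = lam • v → ‖lam‖ < 1) :
    ∃ C ρ : ℝ, 1 ≤ C ∧ 0 < ρ ∧ ρ < 1 ∧ ∀ k : ℕ, ‖M ^ k‖ ≤ C * ρ ^ k := by
  classical
  set Mc : Matrix n n ℂ := M.map (Complex.ofReal : ℝ → ℂ) with hMc
  -- every spectral value has nnnorm < 1
  have hspec : ∀ z ∈ spectrum ℂ Mc, ‖z‖₊ < 1 := by
    intro z hz
    rw [spectrum.mem_iff] at hz
    have hninj : ¬ Function.Injective (algebraMap ℂ (Matrix n n ℂ) z - Mc).mulVec := by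
      intro hinj
      exact hz (Matrix.mulVec_injective_iff_isUnit.mp hinj)
    rw [Function.not_injective_iff] at hninj
    obtain ⟨a, b, hab, hne⟩ := hninj
    set u : n → ℂ := a - b with hu
    have hu0 : u ≠ 0 := sub_ne_zero.2 hne
    have hSu : (algebraMap ℂ (Matrix n n ℂ) z - Mc) *ᵥ u = 0 := by
      rw [hu, Matrix.mulVec_sub, hab, sub_self]
    have heig : Mc *ᵥ u = z • u := by
      have : z • u - Mc *ᵥ u = 0 := by
        have := hSu
        rwa [Matrix.sub_mulVec, Algebra.algebraMap_eq_smul_one,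
          Matrix.smul_mulVec, Matrix.one_mulVec] at this
      exact (sub_eq_zero.mp this).symm
    have := h z u hu0 heig
    have hz1 : ‖z‖ < 1 := by exact this
    exact_mod_cast hz1
  haveI : Nontrivial (Matrix n n ℂ) := by infer_instance
  haveI : CompleteSpace (Matrix n n ℂ) := by infer_instance
  have hr : spectralRadius ℂ Mc < (1 : NNReal) :=
    spectrum.spectralRadius_lt_of_forall_lt Mc hspec
  obtain ⟨ρ0, hρ0l, hρ0r⟩ := ENNReal.lt_iff_exists_nnreal_btwn.mp hr
  have hρ0r' : ρ0 < 1 := by exact_mod_cast hρ0r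
  set ρ1 : NNReal := max ρ0 (1/2) with hρ1
  have hρ1pos : 0 < ρ1 := lt_of_lt_of_le (by norm_num) (le_max_right _ _)
  have hρ1lt : ρ1 < 1 := max_lt hρ0r' (by exact_mod_cast (by norm_num : (1/2 : ℝ) < 1))
  have hrρ1 : spectralRadius ℂ Mc < (ρ1 : ENNReal) :=
    lt_of_lt_of_le hρ0l (by exact_mod_cast le_max_left _ _)
  have hgel := spectrum.pow_nnnorm_pow_one_div_tendsto_nhds_spectralRadius Mc
  have hev : ∀ᶠ k : ℕ in Filter.atTop,
      ((‖Mc ^ k‖₊ : ENNReal) ^ (1 / (k:ℝ))) < (ρ1 : ENNReal) :=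
    hgel.eventually_lt_const hrρ1
  obtain ⟨K, hK⟩ := Filter.eventually_atTop.mp hev
  -- convert to a clean power bound for large k
  have hpow : ∀ k, max K 1 ≤ k → ‖M ^ k‖₊ ≤ ρ1 ^ k := by
    intro k hk
    have hkK : K ≤ k := le_trans (le_max_left _ _) hk
    have hk1 : 1 ≤ k := le_trans (le_max_right _ _) hk
    have hk0 : ((k:ℕ):ℝ) ≠ 0 := by
      exact_mod_cast (Nat.one_le_iff_ne_zero.mp hk1)
    have hlt := hK k hkK
    have hx : (‖Mc ^ k‖₊ : ENNReal) ≤ (ρ1 : ENNReal) ^ (k : ℕ) := by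
      have h1 : ((‖Mc ^ k‖₊ : ENNReal) ^ (1 / (k:ℝ))) ^ ((k:ℕ):ℝ) ≤
          (ρ1 : ENNReal) ^ ((k:ℕ):ℝ) :=
        ENNReal.rpow_le_rpow hlt.le (Nat.cast_nonneg _)
      rw [← ENNReal.rpow_mul, one_div, inv_mul_cancel₀ hk0, ENNReal.rpow_one] at h1
      rwa [← ENNReal.rpow_natCast (ρ1 : ENNReal) k]
    have hMck : ‖Mc ^ k‖₊ = ‖M ^ k‖₊ := by
      have hmp : Mc ^ k = (M ^ k).map (Complex.ofReal : ℝ → ℂ) := by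
        exact
          (map_pow (Complex.ofRealHom.mapMatrix (m := n)) M k).symm
      rw [hmp, nnnorm_map_ofReal]
    rw [hMck] at hx
    have : ((‖M ^ k‖₊ : NNReal) : ENNReal) ≤ ((ρ1 ^ k : NNReal) : ENNReal) := by
      rwa [ENNReal.coe_pow]
    exact_mod_cast this
  -- now build the constant
  set K1 := max K 1 with hK1
  set ρ : ℝ := (ρ1 : ℝ) with hρ
  have hρpos : 0 < ρ := hρ1pos
  have hρlt : ρ < 1 := hρ1lt
  have hne : (Finset.range (K1 + 1)).Nonempty := Finset.nonempty_range_add_one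
  set D : ℝ := (Finset.range (K1 + 1)).sup' hne (fun k => ‖M ^ k‖ / ρ ^ k) with hD
  refine ⟨max 1 D, ρ, le_max_left _ _, hρpos, hρlt, fun k => ?_⟩
  have hρk : (0:ℝ) < ρ ^ k := pow_pos hρpos k
  rcases le_or_gt k K1 with hkle | hkgt
  · have hk' : k ∈ Finset.range (K1 + 1) := Finset.mem_range.mpr (Nat.lt_succ_of_le hkle)
    have : ‖M ^ k‖ / ρ ^ k ≤ D := Finset.le_sup' (fun k => ‖M ^ k‖ / ρ ^ k) hk'
    have h2 : ‖M ^ k‖ / ρ ^ k ≤ max 1 D := this.trans (le_max_right _ _)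
    calc ‖M ^ k‖ = (‖M ^ k‖ / ρ ^ k) * ρ ^ k := by field_simp
      _ ≤ max 1 D * ρ ^ k := mul_le_mul_of_nonneg_right h2 hρk.le
  · have h2 : ‖M ^ k‖ ≤ ρ ^ k := by
      have := hpow k hkgt.le
      calc ‖M ^ k‖ = ((‖M ^ k‖₊ : NNReal) : ℝ) := rfl
        _ ≤ ((ρ1 ^ k : NNReal) : ℝ) := by exact_mod_cast this
        _ = ρ ^ k := by push_cast; rfl
    calc ‖M ^ k‖ ≤ ρ ^ k := h2
      _ ≤ max 1 D * ρ ^ k := le_mul_of_one_le_left hρk.le (le_max_left _ _)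

end Floq

open Floq

/-- Floquet theory for the inhomogeneous linear time-periodic system
`ẋ = A(t)·x + b(t)`: if all Floquet multipliers (eigenvalues of the
monodromy matrix `Φ(T)`) have modulus strictly less than one, then there is a
unique periodic steady state `x⋆`, and every solution converges to it
exponentially in the Euclidean norm. -/
theorem stmt_7 {n : Type*} [Fintype n] [DecidableEq n] [Nonempty n]
    (T : ℝ) (hT : 0 < T)
    (A : ℝ → Matrix n n ℝ) (b : ℝ → n → ℝ)
    (hAcont : ∀ i j, Continuous fun t => A t i j)
    (hbcont : ∀ i, Continuous fun t => b t i)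
    (hAper : ∀ t : ℝ, A (t + T) = A t)
    (hbper : ∀ t : ℝ, b (t + T) = b t)
    (Φ : ℝ → Matrix n n ℝ)
    (hΦderiv : ∀ (t : ℝ) i j, HasDerivAt (fun s => Φ s i j) ((A t * Φ t) i j) t)
    (hΦ0 : Φ 0 = 1)
    (hFloquet : ∀ (lam : ℂ) (v : n → ℂ), v ≠ 0 →
      ((Φ T).map (Complex.ofReal : ℝ → ℂ)) *ᵥ v = lam • v → ‖lam‖ < 1) :
    ∃ xstar : ℝ → n → ℝ,
      ((∀ (t : ℝ) (i : n), HasDerivAt (fun s => xstar s i) ((A t *ᵥ xstar t) i + b t i) t) ∧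
        (∀ t : ℝ, 0 ≤ t → xstar (t + T) = xstar t)) ∧
      (∀ y : ℝ → n → ℝ,
        ((∀ (t : ℝ) (i : n), HasDerivAt (fun s => y s i) ((A t *ᵥ y t) i + b t i) t) ∧
          (∀ t : ℝ, 0 ≤ t → y (t + T) = y t)) → y = xstar) ∧
      (∃ γ : ℝ, 0 < γ ∧ ∃ m : ℝ, 1 ≤ m ∧
        ∀ x : ℝ → n → ℝ,
          (∀ (t : ℝ) (i : n), HasDerivAt (fun s => x s i) ((A t *ᵥ x t) i + b t i) t) →
          ∀ t : ℝ, 0 ≤ t →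
            Real.sqrt (∑ i, (x t i - xstar t i) ^ 2) ≤
              m * Real.exp (-γ * t) * Real.sqrt (∑ i, (x 0 i - xstar 0 i) ^ 2)) := by
  classical
  -- continuity of Φ
  have hΦc : ∀ i j, Continuous fun t => Φ t i j := fun i j =>
    continuous_iff_continuousAt.2 fun t => (hΦderiv t i j).continuousAt
  have hΦm : Continuous Φ := continuous_matrix fun i j => hΦc i j
  -- uniqueness of homogeneous solutions
  have homUniq : ∀ (f g : ℝ → n → ℝ), (∀ t, HasDerivAt f (A t *ᵥ f t) t) →
      (∀ t, HasDerivAt g (A t *ᵥ g t) t) → ∀ t₀, f t₀ = g t₀ → f = g := by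
    intro f g hf hg t₀ h₀
    refine lin_uniq A hAcont (fun _ => 0) f g ?_ ?_ t₀ h₀
    · intro t; simpa using hf t
    · intro t; simpa using hg t
  -- Φ t *ᵥ v solves the homogeneous system
  have hΦv : ∀ (v : n → ℝ) (t : ℝ),
      HasDerivAt (fun s => Φ s *ᵥ v) (A t *ᵥ (Φ t *ᵥ v)) t := by
    intro v t
    refine hasDerivAt_pi.2 fun i => ?_
    have := hasDerivAt_mulVec (hΦderiv t) v i
    simpa [Matrix.mulVec_mulVec] using this
  have hsol_eq : ∀ (f : ℝ → n → ℝ), (∀ t, HasDerivAt f (A t *ᵥ f t) t) →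
      f = fun t => Φ t *ᵥ f 0 := by
    intro f hf
    refine homUniq f _ hf (fun t => hΦv (f 0) t) 0 ?_
    rw [hΦ0, Matrix.one_mulVec]
  -- invertibility of Φ t
  have hdet : ∀ t, IsUnit (Φ t).det := by
    intro t
    rw [← Matrix.isUnit_iff_isUnit_det]
    rw [← Matrix.mulVec_injective_iff_isUnit]
    intro v w hvw
    have h0 : Φ t *ᵥ (v - w) = 0 := by rw [Matrix.mulVec_sub, hvw, sub_self]
    have hfg : (fun s => Φ s *ᵥ (v - w)) = (fun _ => (0 : n → ℝ)) := by
      refine homUniq _ _ (fun s => hΦv (v - w) s) ?_ t ?_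
      · intro s
        simpa [Matrix.mulVec_zero] using (hasDerivAt_const s (0 : n → ℝ))
      · exact h0
    have := congrFun hfg 0
    rw [hΦ0, Matrix.one_mulVec] at this
    exact sub_eq_zero.mp this
  -- monodromy multiplicativity
  have hmulΦ : ∀ t, Φ (t + T) = Φ t * Φ T := by
    have key : ∀ v : n → ℝ, (fun s => Φ (s + T) *ᵥ v) = fun s => Φ s *ᵥ (Φ T *ᵥ v) := by
      intro v
      refine homUniq _ _ ?_ (fun t => hΦv (Φ T *ᵥ v) t) 0 ?_
      · intro t
        have h1 := hΦv v (t + T)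
        have h2 : HasDerivAt (fun s : ℝ => s + T) 1 t := (hasDerivAt_id t).add_const T
        have h3 := HasDerivAt.scomp t h1 h2
        simp only [one_smul, Function.comp] at h3
        rw [hAper t] at h3
        exact h3
      · show Φ (0 + T) *ᵥ v = Φ 0 *ᵥ (Φ T *ᵥ v)
        rw [zero_add, hΦ0, Matrix.one_mulVec]
    intro t
    ext i j
    have h := congrFun (key (Pi.single j 1)) t
    rw [Matrix.mulVec_mulVec] at h
    have h2 := congrFun h i
    rw [Matrix.mulVec_single_one, Matrix.mulVec_single_one] at h2
    simpa using h2
  have hpowΦ : ∀ (k : ℕ) (s : ℝ), Φ (s + k * T) = Φ s * (Φ T) ^ k := by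
    intro k
    induction k with
    | zero => intro s; simp
    | succ k ih =>
      intro s
      have : (s + (k + 1 : ℕ) * T) = (s + k * T) + T := by push_cast; ring
      rw [this, hmulΦ, ih, pow_succ, mul_assoc]
  -- eigenvalue-1 exclusion
  have eig1 : ∀ u : n → ℝ, Φ T *ᵥ u = u → u = 0 := by
    intro u hu
    by_contra hu0
    have hvc0 : (fun i => (u i : ℂ)) ≠ 0 := by
      intro h0
      apply hu0
      funext i
      have h0i := congrFun h0 i
      rw [Pi.zero_apply] at h0i
      exact_mod_cast h0i
    have heig : (Φ T).map (Complex.ofReal : ℝ → ℂ) *ᵥ (fun i => (u i : ℂ))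
        = (1:ℂ) • (fun i => (u i : ℂ)) := by
      funext i
      have h1 : ∑ j, Φ T i j * u j = u i := by
        have := congrFun hu i
        simpa [Matrix.mulVec, dotProduct] using this
      simp only [Matrix.mulVec, dotProduct, Matrix.map_apply, Pi.smul_apply, one_smul]
      exact_mod_cast congrArg (Complex.ofReal : ℝ → ℂ) h1
    have := hFloquet 1 _ hvc0 heig
    simp at this
  -- inverse matrix and its continuity
  set Ψ : ℝ → Matrix n n ℝ := fun t => (Φ t)⁻¹ with hΨ
  have hΦΨ : ∀ t, Φ t * Ψ t = 1 := fun t => Matrix.mul_nonsing_inv _ (hdet t)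
  have hdetne : ∀ t, (Φ t).det ≠ 0 := fun t => (hdet t).ne_zero
  set g : ℝ → n → ℝ := fun s => Ψ s *ᵥ b s with hg
  have hΨc : ∀ i j, Continuous fun s => Ψ s i j := by
    intro i j
    have h1 : Continuous fun s => (Φ s).det := hΦm.matrix_det
    have h2 : Continuous fun s => ((Φ s).det)⁻¹ := h1.inv₀ hdetne
    have h3 : Continuous fun s => (Φ s).adjugate i j := (hΦm.matrix_adjugate).matrix_elem i j
    have heq : (fun s => Ψ s i j) = fun s => ((Φ s).det)⁻¹ * (Φ s).adjugate i j := by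
      funext s
      show (Φ s)⁻¹ i j = ((Φ s).det)⁻¹ * (Φ s).adjugate i j
      rw [Matrix.inv_def, Matrix.smul_apply, Ring.inverse_eq_inv', smul_eq_mul]
    rw [heq]
    exact h2.mul h3
  have hgc : Continuous g := by
    refine continuous_pi fun i => ?_
    simp only [hg, Matrix.mulVec, dotProduct]
    exact continuous_finset_sum _ fun j _ => (hΨc i j).mul (hbcont j)
  have hInt : ∀ a c : ℝ, IntervalIntegrable g MeasureTheory.volume a c := fun a c =>
    hgc.intervalIntegrable a c
  -- S = 1 - Φ T invertible
  have hdetS : IsUnit (1 - Φ T).det := by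
    by_contra hns
    have hnu : ¬ IsUnit (1 - Φ T) := fun h => hns ((Matrix.isUnit_iff_isUnit_det _).mp h)
    have hninj : ¬ Function.Injective (1 - Φ T).mulVec := fun hinj =>
      hnu (Matrix.mulVec_injective_iff_isUnit.mp hinj)
    rw [Function.not_injective_iff] at hninj
    obtain ⟨a, b', hab, hne⟩ := hninj
    have h0 : (1 - Φ T) *ᵥ (a - b') = 0 := by rw [Matrix.mulVec_sub, hab, sub_self]
    have h1 : Φ T *ᵥ (a - b') = a - b' := by
      rw [Matrix.sub_mulVec, Matrix.one_mulVec, sub_eq_zero] at h0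
      exact h0.symm
    exact sub_ne_zero.2 hne (eig1 _ h1)
  set I0 : n → ℝ := ∫ s in (0:ℝ)..T, g s with hI0
  set c0 : n → ℝ := (1 - Φ T)⁻¹ *ᵥ (Φ T *ᵥ I0) with hc0
  set w : ℝ → n → ℝ := fun t => c0 + ∫ s in (0:ℝ)..t, g s with hw_def
  have hw : ∀ t, HasDerivAt w (g t) t := by
    intro t
    have : HasDerivAt (fun u => ∫ s in (0:ℝ)..u, g s) (g t) t :=
      intervalIntegral.integral_hasDerivAt_right (hInt 0 t)
        (hgc.stronglyMeasurableAtFilter _ _) hgc.continuousAt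
    simpa [hw_def] using this.const_add c0
  set xstar : ℝ → n → ℝ := fun t => Φ t *ᵥ w t with hxs
  have hfix : Φ T *ᵥ c0 + Φ T *ᵥ I0 = c0 := by
    have h1 : (1 - Φ T) *ᵥ c0 = Φ T *ᵥ I0 := by
      rw [hc0, Matrix.mulVec_mulVec, Matrix.mul_nonsing_inv _ hdetS, Matrix.one_mulVec]
    rw [Matrix.sub_mulVec, Matrix.one_mulVec] at h1
    rw [← h1]; abel
  -- xstar solves the inhomogeneous equation
  have hxd : ∀ (t : ℝ) (i : n),
      HasDerivAt (fun s => xstar s i) ((A t *ᵥ xstar t) i + b t i) t := by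
    intro t i
    have hwj := hasDerivAt_pi.1 (hw t)
    have h1 : HasDerivAt (fun s => ∑ j, Φ s i j * w s j)
        (∑ j, ((A t * Φ t) i j * w t j + Φ t i j * g t j)) t :=
      HasDerivAt.fun_sum fun j _ => (hΦderiv t i j).mul (hwj j)
    have h2 : ∑ j, ((A t * Φ t) i j * w t j + Φ t i j * g t j)
        = (A t *ᵥ xstar t) i + b t i := by
      rw [Finset.sum_add_distrib]
      congr 1
      · have hm : (A t * Φ t) *ᵥ w t = A t *ᵥ xstar t := by
          rw [← Matrix.mulVec_mulVec]
        have := congrFun hm i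
        simpa [Matrix.mulVec, dotProduct] using this
      · have hm : Φ t *ᵥ g t = b t := by
          rw [hg, Matrix.mulVec_mulVec, hΦΨ, Matrix.one_mulVec]
        have := congrFun hm i
        simpa [Matrix.mulVec, dotProduct] using this
    have h3 : (fun s => xstar s i) = fun s => ∑ j, Φ s i j * w s j := by
      funext s
      simp [hxs, Matrix.mulVec, dotProduct]
    rw [h3]
    exact h2 ▸ h1
  -- xstar is T-periodic (for all t)
  have hper : ∀ t : ℝ, xstar (t + T) = xstar t := by
    intro t
    have hsplit : (∫ s in (0:ℝ)..(t+T), g s) = I0 + ∫ s in T..(t+T), g s :=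
      (intervalIntegral.integral_add_adjacent_intervals (hInt 0 T) (hInt T (t+T))).symm
    have hstep2 : (∫ s in T..(t+T), g s) = ∫ s in (0:ℝ)..t, g (s + T) := by
      have := intervalIntegral.integral_comp_add_right (a := (0:ℝ)) (b := t) (f := g) T
      rw [zero_add] at this
      exact this.symm
    have hgT : ∀ s, g (s + T) = (Φ T)⁻¹ *ᵥ g s := by
      intro s
      have h1 : Ψ (s + T) = (Φ T)⁻¹ * Ψ s := by
        rw [hΨ]
        show (Φ (s+T))⁻¹ = (Φ T)⁻¹ * (Φ s)⁻¹
        rw [hmulΦ s, Matrix.mul_inv_rev]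
      show Ψ (s + T) *ᵥ b (s + T) = (Φ T)⁻¹ *ᵥ (Ψ s *ᵥ b s)
      rw [h1, hbper s, Matrix.mulVec_mulVec]
    have hstep4 : (∫ s in (0:ℝ)..t, g (s + T)) = (Φ T)⁻¹ *ᵥ ∫ s in (0:ℝ)..t, g s := by
      have hL : ∀ v : n → ℝ,
          (LinearMap.toContinuousLinearMap (Matrix.mulVecLin ((Φ T)⁻¹))) v
            = (Φ T)⁻¹ *ᵥ v := fun v => rfl
      calc (∫ s in (0:ℝ)..t, g (s + T)) = ∫ s in (0:ℝ)..t, (Φ T)⁻¹ *ᵥ g s := by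
            simp_rw [hgT]
        _ = ∫ s in (0:ℝ)..t,
              (LinearMap.toContinuousLinearMap (Matrix.mulVecLin ((Φ T)⁻¹))) (g s) := by
            simp_rw [hL]
        _ = (LinearMap.toContinuousLinearMap (Matrix.mulVecLin ((Φ T)⁻¹)))
              (∫ s in (0:ℝ)..t, g s) :=
            ContinuousLinearMap.intervalIntegral_comp_comm _ (hInt 0 t)
        _ = (Φ T)⁻¹ *ᵥ ∫ s in (0:ℝ)..t, g s := hL _
    show Φ (t + T) *ᵥ w (t + T) = Φ t *ᵥ w t
    have hwT : w (t + T) = c0 + (I0 + (Φ T)⁻¹ *ᵥ ∫ s in (0:ℝ)..t, g s) := by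
      show c0 + (∫ s in (0:ℝ)..(t+T), g s) = _
      rw [hsplit, hstep2, hstep4]
    calc Φ (t + T) *ᵥ w (t + T)
        = Φ t *ᵥ (Φ T *ᵥ (c0 + (I0 + (Φ T)⁻¹ *ᵥ ∫ s in (0:ℝ)..t, g s))) := by
          rw [hwT, hmulΦ t, ← Matrix.mulVec_mulVec]
      _ = Φ t *ᵥ (c0 + ∫ s in (0:ℝ)..t, g s) := by
          have harg : Φ T *ᵥ (c0 + (I0 + (Φ T)⁻¹ *ᵥ ∫ s in (0:ℝ)..t, g s))
              = c0 + ∫ s in (0:ℝ)..t, g s := by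
            rw [Matrix.mulVec_add, Matrix.mulVec_add,
              Matrix.mulVec_mulVec (∫ s in (0:ℝ)..t, g s) (Φ T) ((Φ T)⁻¹),
              Matrix.mul_nonsing_inv _ (hdet T), Matrix.one_mulVec, ← add_assoc, hfix]
          rw [harg]
      _ = Φ t *ᵥ w t := rfl
  -- difference of two solutions solves homogeneous system
  have diffsol : ∀ (x : ℝ → n → ℝ),
      (∀ (t : ℝ) (i : n), HasDerivAt (fun s => x s i) ((A t *ᵥ x t) i + b t i) t) →
      ∀ t, HasDerivAt (fun s => x s - xstar s) (A t *ᵥ (x t - xstar t)) t := by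
    intro x hx t
    refine hasDerivAt_pi.2 fun i => ?_
    have := (hx t i).sub (hxd t i)
    have heq : (A t *ᵥ x t) i + b t i - ((A t *ᵥ xstar t) i + b t i)
        = (A t *ᵥ (x t - xstar t)) i := by
      rw [Matrix.mulVec_sub]; simp
    rw [heq] at this
    exact this
  refine ⟨xstar, ⟨hxd, fun t _ => hper t⟩, ?_, ?_⟩
  · -- uniqueness
    intro y ⟨hy, hyper⟩
    have hdiff := diffsol y hy
    have hd_eq : (fun s => y s - xstar s) = fun s => Φ s *ᵥ (y 0 - xstar 0) :=
      hsol_eq _ hdiff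
    have hdT : y T - xstar T = y 0 - xstar 0 := by
      have h1 : y (0 + T) = y 0 := hyper 0 le_rfl
      have h2 : xstar (0 + T) = xstar 0 := hper 0
      rw [zero_add] at h1 h2
      rw [h1, h2]
    have h3 : Φ T *ᵥ (y 0 - xstar 0) = y 0 - xstar 0 := by
      have := congrFun hd_eq T
      rw [← this, hdT]
    have h4 : y 0 - xstar 0 = 0 := eig1 _ h3
    funext t
    have := congrFun hd_eq t
    rw [h4, Matrix.mulVec_zero] at this
    exact sub_eq_zero.mp this
  · -- exponential decay
    obtain ⟨C, ρ, hC1, hρpos, hρlt, hCb⟩ := pow_bound (Φ T) hFloquet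
    obtain ⟨C₁, hC₁0, hC₁⟩ := bound_on_Icc Φ hΦc 0 T
    have hC₁1 : 1 ≤ C₁ := by
      have h1 := hC₁ 0 ⟨le_rfl, hT.le⟩
      rw [hΦ0] at h1
      have : ‖(1 : Matrix n n ℝ)‖ = 1 := norm_one
      linarith
    set N : ℝ := Real.sqrt (Fintype.card n) with hN
    have hN0 : 0 ≤ N := Real.sqrt_nonneg _
    have hlogneg : Real.log ρ < 0 := Real.log_neg hρpos hρlt
    set γ : ℝ := -Real.log ρ / T with hγdef
    have hγ : 0 < γ := div_pos (neg_pos.2 hlogneg) hT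
    set m : ℝ := max 1 (N * C₁ * C * ρ⁻¹) with hm
    refine ⟨γ, hγ, m, le_max_left _ _, ?_⟩
    intro x hx t ht
    have hdiff := diffsol x hx
    have hd_eq : (fun s => x s - xstar s) = fun s => Φ s *ᵥ ((fun s => x s - xstar s) 0) :=
      hsol_eq _ hdiff
    set v0 : n → ℝ := x 0 - xstar 0 with hv0
    set k : ℕ := ⌊t / T⌋₊ with hk
    set s : ℝ := t - k * T with hs
    have hdivT : t / T * T = t := div_mul_cancel₀ t hT.ne'
    have hfle : (k : ℝ) ≤ t / T := Nat.floor_le (div_nonneg ht hT.le)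
    have hflt : t / T < (k : ℝ) + 1 := Nat.lt_floor_add_one (t / T)
    have hs0 : 0 ≤ s := by
      have := mul_le_mul_of_nonneg_right hfle hT.le
      rw [hdivT] at this
      simp only [hs]
      linarith
    have hsT : s ≤ T := by
      have := mul_le_mul_of_nonneg_right hflt.le hT.le
      rw [hdivT] at this
      simp only [hs]
      nlinarith
    have hts : t = s + (k : ℝ) * T := by simp only [hs]; ring
    have hΦt : Φ t = Φ s * (Φ T) ^ k := by
      rw [hts]; exact hpowΦ k s
    have hdt : x t - xstar t = Φ t *ᵥ v0 := congrFun hd_eq t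
    have E2 : ‖Φ t *ᵥ v0‖ ≤ C₁ * (C * ρ ^ k) * ‖v0‖ := by
      calc ‖Φ t *ᵥ v0‖ ≤ ‖Φ t‖ * ‖v0‖ := Matrix.linfty_opNorm_mulVec _ _
        _ ≤ C₁ * (C * ρ ^ k) * ‖v0‖ := by
            refine mul_le_mul_of_nonneg_right ?_ (norm_nonneg _)
            rw [hΦt]
            calc ‖Φ s * (Φ T) ^ k‖ ≤ ‖Φ s‖ * ‖(Φ T) ^ k‖ := Matrix.linfty_opNorm_mul _ _
              _ ≤ C₁ * (C * ρ ^ k) := by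
                  refine mul_le_mul (hC₁ s ⟨hs0, hsT⟩) (hCb k) (norm_nonneg _) hC₁0
    have E4 : ρ ^ k ≤ ρ⁻¹ * Real.exp (-γ * t) := by
      have hk1 : t / T - 1 ≤ (k : ℝ) := by linarith
      have hmono : (k : ℝ) * Real.log ρ ≤ (t / T - 1) * Real.log ρ :=
        mul_le_mul_of_nonpos_right hk1 hlogneg.le
      have hexp : (t / T - 1) * Real.log ρ = -γ * t + -Real.log ρ := by
        rw [hγdef]; field_simp; ring
      calc ρ ^ k = Real.exp ((k : ℝ) * Real.log ρ) := by
            rw [← Real.exp_log hρpos, ← Real.exp_nat_mul, Real.log_exp]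
        _ ≤ Real.exp ((t / T - 1) * Real.log ρ) := Real.exp_le_exp.2 hmono
        _ = ρ⁻¹ * Real.exp (-γ * t) := by
            rw [hexp, Real.exp_add, Real.exp_neg, Real.exp_log hρpos]; ring
    have hL1 : Real.sqrt (∑ i, (x t i - xstar t i) ^ 2) ≤ N * ‖Φ t *ᵥ v0‖ := by
      have h := sqrt_sum_sq_le (x t - xstar t)
      simp only [Pi.sub_apply] at h
      rw [hdt] at h
      exact h
    have hR : ‖v0‖ ≤ Real.sqrt (∑ i, (x 0 i - xstar 0 i) ^ 2) := by
      have h := norm_le_sqrt_sum_sq (x 0 - xstar 0)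
      simp only [Pi.sub_apply] at h
      exact h
    set R0 : ℝ := Real.sqrt (∑ i, (x 0 i - xstar 0 i) ^ 2) with hR0
    have hR00 : 0 ≤ R0 := Real.sqrt_nonneg _
    have hexp0 : 0 ≤ Real.exp (-γ * t) := (Real.exp_pos _).le
    have hC0 : 0 ≤ C := le_trans zero_le_one hC1
    calc Real.sqrt (∑ i, (x t i - xstar t i) ^ 2)
        ≤ N * ‖Φ t *ᵥ v0‖ := hL1
      _ ≤ N * (C₁ * (C * ρ ^ k) * ‖v0‖) := mul_le_mul_of_nonneg_left E2 hN0
      _ ≤ N * (C₁ * (C * (ρ⁻¹ * Real.exp (-γ * t))) * R0) := by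
          refine mul_le_mul_of_nonneg_left ?_ hN0
          refine mul_le_mul ?_ hR (norm_nonneg _) ?_
          · refine mul_le_mul_of_nonneg_left ?_ (le_trans zero_le_one hC₁1)
            exact mul_le_mul_of_nonneg_left E4 hC0
          · positivity
      _ = (N * C₁ * C * ρ⁻¹) * Real.exp (-γ * t) * R0 := by ring
      _ ≤ m * Real.exp (-γ * t) * R0 := by
          refine mul_le_mul_of_nonneg_right
            (mul_le_mul_of_nonneg_right (le_max_right _ _) hexp0) hR00
end

section
/- Let m be a finite type and consider matrices indexed by m ⊕ Unit. Let Q : ℝ → M_{m⊕Unit}(ℝ) be a matrix-valued function and let p : ℝ → ((m ⊕ Unit) → ℝ) be differentiable with (row-vector dynamics) p'(t) b = ∑_a p(t) a · Q(t) a b for all t and all b, and with the normalization ∑_a p(t) a = 1 for all t. Define the reduced vector p_red(t) i := p(t) (inl i) for i ∈ m, the reduced matrix Q_red(t) i j := Q(t) (inl i) (inl j) − Q(t) (inr ⋆) (inl j), and the source term β(t) j := Q(t) (inr ⋆) (inl j). Then for all t and all j ∈ m: (p_red)'(t) j = ∑_i p_red(t) i · Q_red(t) i j + β(t) j. -/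
open Matrix

/-- Reduced Kolmogorov Forward Equation: eliminating the last coordinate of a
normalized probability vector evolving by `ṗ = p·Q(t)` yields
`ṗ_red = p_red·Q_red(t) + β(t)` with
`Q_red(t) i j = Q(t) (inl i) (inl j) − Q(t) (inr ⋆) (inl j)` and
`β(t) j = Q(t) (inr ⋆) (inl j)`. -/
theorem stmt_9 {m : Type*} [Fintype m] [DecidableEq m]
    (Q : ℝ → Matrix (m ⊕ Unit) (m ⊕ Unit) ℝ)
    (p : ℝ → (m ⊕ Unit) → ℝ)
    (hderiv : ∀ (t : ℝ) (b : m ⊕ Unit),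
      HasDerivAt (fun s => p s b) (∑ a, p t a * Q t a b) t)
    (hnorm : ∀ t : ℝ, ∑ a, p t a = 1) :
    ∀ (t : ℝ) (j : m),
      HasDerivAt (fun s => p s (Sum.inl j))
        ((∑ i, p t (Sum.inl i) *
            (Q t (Sum.inl i) (Sum.inl j) - Q t (Sum.inr ()) (Sum.inl j))) +
          Q t (Sum.inr ()) (Sum.inl j)) t := by
  intro t j
  have h := hderiv t (Sum.inl j)
  have hn := hnorm t
  rw [Fintype.sum_sum_type] at h hn
  simp only [Finset.univ_unique, Finset.sum_singleton] at h hn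
  have hp : p t (Sum.inr ()) = 1 - ∑ i, p t (Sum.inl i) := by linarith
  convert h using 1
  rw [hp]
  simp only [mul_sub, Finset.sum_sub_distrib, ← Finset.sum_mul, Finset.mul_sum]
  ring
end
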